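/- For each ordered pair (i,j) of distinct elements of {0,t,1} with third element k, define G_{ij}: ℂ³ × ℂ⁴ → ℂ³ × ℂ⁴ by G_{ij}(X, a) = (Y, a') where Y_i = X_j, Y_j = X_i − F_{X_i}(X;a), Y_k = X_k, and a' is a with a_i, a_j swapped. Then for every (X,a) with F(X;a) = 0 and every permutation (i,j,k) of (0,t,1): (1) G_{ij}(G_{ji}(X,a)) = (X,a); (2) the braid relation G_{ij}∘G_{jk}∘G_{ij}(X,a) = G_{jk}∘G_{ij}∘G_{jk}(X,a) holds; (3) G_{ki}(X,a) = G_{ji}∘G_{jk}∘G_{ij}(X,a). -/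

import Mathlib

/-! Relabelling the indices by a permutation `σ` conjugates `G_{ij}` into `G_{σ i, σ j}`, because
`θ_i = a_i a_∞ + a_j a_k` is symmetric in the two other labels. It therefore suffices to treat
`(i, j, k) = (0, t, 1)`, where the three relations are polynomial identities in `(X, a)`. -/

noncomputable section

/-- The Fricke polynomial `F(X; a)` of the Painlevé VI character variety, where
the indices `0, 1, 2` of `Fin 3` stand for the labels `0, t, 1`, and `aI = a_∞`. -/
def Fr (X a : Fin 3 → ℂ) (aI : ℂ) : ℂ :=
  X 0 * X 1 * X 2 + X 0 ^ 2 + X 1 ^ 2 + X 2 ^ 2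
    - (a 0 * aI + a 1 * a 2) * X 0 - (a 1 * aI + a 2 * a 0) * X 1 - (a 2 * aI + a 0 * a 1) * X 2
    + (a 0 * a 1 * a 2 * aI + a 0 ^ 2 + a 1 ^ 2 + a 2 ^ 2 + aI ^ 2 - 4)

/-- The partial derivative `F_{X_i} = X_j X_k + 2 X_i - θ_i` of the Fricke polynomial,
for `(i,j,k)` a permutation of the three indices. -/
def FrD (X a : Fin 3 → ℂ) (aI : ℂ) (i j k : Fin 3) : ℂ :=
  X j * X k + 2 * X i - (a i * aI + a j * a k)

/-- The half-monodromy map `G_{ij}` on pairs `(X, a)` (the parameter `a_∞ = aI` is fixed):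
`Y_i = X_j`, `Y_j = X_i − F_{X_i}(X;a)`, `Y_k = X_k`, and `a_i, a_j` are swapped.
Here `(i,j,k)` is a permutation of the three indices. -/
def G (aI : ℂ) (i j k : Fin 3) (p : (Fin 3 → ℂ) × (Fin 3 → ℂ)) :
    (Fin 3 → ℂ) × (Fin 3 → ℂ) :=
  (fun l => if l = i then p.1 j else if l = j then p.1 i - FrD p.1 p.2 aI i j k else p.1 l,
   fun l => if l = i then p.2 j else if l = j then p.2 i else p.2 l)

def relabel (σ : Equiv.Perm (Fin 3)) : (Fin 3 → ℂ) × (Fin 3 → ℂ) ≃ (Fin 3 → ℂ) × (Fin 3 → ℂ) :=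
  (σ.arrowCongr (Equiv.refl ℂ)).prodCongr (σ.arrowCongr (Equiv.refl ℂ))

theorem G_perm_eq_conj (aI : ℂ) (σ : Equiv.Perm (Fin 3)) (i j k : Fin 3) :
    G aI (σ i) (σ j) (σ k) = relabel σ ∘ G aI i j k ∘ (relabel σ).symm := by
  funext p
  ext l <;> simp [G, FrD, relabel, Equiv.symm_apply_eq]

theorem G_G_swap (aI : ℂ) (p : (Fin 3 → ℂ) × (Fin 3 → ℂ)) :
    G aI 0 1 2 (G aI 1 0 2 p) = p := by
  ext l <;> fin_cases l <;> simp only [G, FrD, Fin.reduceEq, reduceIte, Fin.reduceFinMk] <;> ring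

theorem G_braid (aI : ℂ) (p : (Fin 3 → ℂ) × (Fin 3 → ℂ)) :
    G aI 0 1 2 (G aI 1 2 0 (G aI 0 1 2 p)) = G aI 1 2 0 (G aI 0 1 2 (G aI 1 2 0 p)) := by
  ext l <;> fin_cases l <;> simp only [G, FrD, Fin.reduceEq, reduceIte, Fin.reduceFinMk] <;> ring

theorem G_cyclic (aI : ℂ) (p : (Fin 3 → ℂ) × (Fin 3 → ℂ)) :
    G aI 2 0 1 p = G aI 1 0 2 (G aI 1 2 0 (G aI 0 1 2 p)) := by
  ext l <;> fin_cases l <;> simp only [G, FrD, Fin.reduceEq, reduceIte, Fin.reduceFinMk] <;> ring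

theorem half_monodromy_braid_relations_general
    (aI : ℂ) (σ : Equiv.Perm (Fin 3)) (X a : Fin 3 → ℂ) :
    G aI (σ 0) (σ 1) (σ 2) (G aI (σ 1) (σ 0) (σ 2) (X, a)) = (X, a) ∧
    G aI (σ 0) (σ 1) (σ 2) (G aI (σ 1) (σ 2) (σ 0) (G aI (σ 0) (σ 1) (σ 2) (X, a))) =
      G aI (σ 1) (σ 2) (σ 0) (G aI (σ 0) (σ 1) (σ 2) (G aI (σ 1) (σ 2) (σ 0) (X, a))) ∧
    G aI (σ 2) (σ 0) (σ 1) (X, a) =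
      G aI (σ 1) (σ 0) (σ 2) (G aI (σ 1) (σ 2) (σ 0) (G aI (σ 0) (σ 1) (σ 2) (X, a))) := by
  simp only [G_perm_eq_conj, Function.comp_apply, Equiv.symm_apply_apply]
  refine ⟨?_, ?_, ?_⟩
  · rw [G_G_swap, Equiv.apply_symm_apply]
  · rw [G_braid]
  · rw [G_cyclic]

/-- **Braid group relations for the half-monodromy maps** on the PVI character variety:
on `{F(X;a) = 0}`, for any permutation `(i,j,k) = (σ 0, σ 1, σ 2)` of the labels `(0,t,1)`,
(1) `G_{ij} ∘ G_{ji} = id`; (2) `G_{ij} ∘ G_{jk} ∘ G_{ij} = G_{jk} ∘ G_{ij} ∘ G_{jk}`;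
(3) `G_{ki} = G_{ji} ∘ G_{jk} ∘ G_{ij}`. -/
theorem half_monodromy_braid_relations
    (aI : ℂ) (σ : Equiv.Perm (Fin 3)) (X a : Fin 3 → ℂ) (h : Fr X a aI = 0) :
    G aI (σ 0) (σ 1) (σ 2) (G aI (σ 1) (σ 0) (σ 2) (X, a)) = (X, a) ∧
    G aI (σ 0) (σ 1) (σ 2) (G aI (σ 1) (σ 2) (σ 0) (G aI (σ 0) (σ 1) (σ 2) (X, a))) =
      G aI (σ 1) (σ 2) (σ 0) (G aI (σ 0) (σ 1) (σ 2) (G aI (σ 1) (σ 2) (σ 0) (X, a))) ∧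
    G aI (σ 2) (σ 0) (σ 1) (X, a) =
      G aI (σ 1) (σ 0) (σ 2) (G aI (σ 1) (σ 2) (σ 0) (G aI (σ 0) (σ 1) (σ 2) (X, a))) :=
  half_monodromy_braid_relations_general aI σ X a
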